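/- Fix n ≥ 1 and 1 ≤ s ≤ n, and let G = ⟨Z₁, …, Z_s⟩ ⊆ M_{2^n}(ℂ). Then the linear span, over all M₀ ∈ M_{2^n}(ℂ) for which 𝒱_{M₀} := span_ℂ{g M₀ g : g ∈ G} contains the identity and is closed under adjoints, of the subspaces 𝒱_{M₀}, equals span_ℂ({I₂^{⊗n}} ∪ {σ_{j₁} ⊗ ⋯ ⊗ σ_{jₙ} : j₁, …, jₙ ∈ {0,1,2,3} and there exists 1 ≤ r ≤ s with j_r ∈ {2,3}}). -/

import Mathlib

open Matrix

/-- The four Pauli matrices: `σ₀ = I₂`, `σ₁ = Z`, `σ₂ = X`, `σ₃ = Y`. -/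
noncomputable def pauli : Fin 4 → Matrix (Fin 2) (Fin 2) ℂ
  | 0 => 1
  | 1 => !![1, 0; 0, -1]
  | 2 => !![0, 1; 1, 0]
  | 3 => !![0, Complex.I; -Complex.I, 0]

/-- The Pauli word `σ_{j₁} ⊗ ⋯ ⊗ σ_{jₙ} ∈ M_{2^n}(ℂ)`, as a matrix indexed by
`{0,1}^n`, with entry `∏ i, (σ_{j i}) (a i) (b i)`. -/
noncomputable def pauliWord {n : ℕ} (j : Fin n → Fin 4) :
    Matrix (Fin n → Fin 2) (Fin n → Fin 2) ℂ :=
  Matrix.of fun a b => ∏ i, pauli (j i) (a i) (b i)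

/-- `Z_r`: the Pauli word with `Z` in the `r`-th position and `I₂` elsewhere. -/
noncomputable def Zword {n : ℕ} (r : Fin n) :
    Matrix (Fin n → Fin 2) (Fin n → Fin 2) ℂ :=
  pauliWord (fun i => if i = r then 1 else 0)

/-- The subgroup (as a multiplicative submonoid: the generators are involutions,
so the generated submonoid is the generated subgroup) `⟨Z₁, …, Z_s⟩` of `M_{2^n}(ℂ)`. -/
noncomputable def ZSubgroup (n s : ℕ) :
    Submonoid (Matrix (Fin n → Fin 2) (Fin n → Fin 2) ℂ) :=
  Submonoid.closure {A | ∃ r : Fin n, (r : ℕ) < s ∧ A = Zword r}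

/-- The Pauli group `𝒫_n` on `n` qubits, as a set of matrices. -/
noncomputable def pauliGroupSet (n : ℕ) :
    Set (Matrix (Fin n → Fin 2) (Fin n → Fin 2) ℂ) :=
  {A | ∃ c ∈ ({1, -1, Complex.I, -Complex.I} : Set ℂ),
    ∃ j : Fin n → Fin 4, A = c • pauliWord j}

/-!
Every `g ∈ G` is diagonal with entries `±1` that depend only on the first `s` bits of the
index, so conjugation by `g` fixes each entry `(a, b)` with `a` and `b` agreeing on those bits.
Hence `𝒱_{M}` lies in `ℂ M + K`, where `K` consists of the matrices vanishing at all such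
entries; expanding matrix units in Pauli words shows that `K` is spanned by the words with
`X` or `Y` in one of the first `s` positions. If `1 ∈ 𝒱_{M}`, then, as `1 ∉ K`, `M ∈ ℂ 1 + K`,
which gives one inclusion. Conversely, for such a word `P` with `X` or `Y` at position `r`,
`Z_r` anticommutes with `P`, so `1 ± P ∈ 𝒱_{1 + P}`, an operator system because `1 + P` is
Hermitian.
-/

lemma star_pauli_apply (k : Fin 4) (x y : Fin 2) : star (pauli k x y) = pauli k y x := by
  fin_cases k <;> fin_cases x <;> fin_cases y <;> simp [pauli]

lemma pauli_apply_of_lt_two {k : Fin 4} (hk : (k : ℕ) < 2) {x y : Fin 2} (hxy : x ≠ y) :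
    pauli k x y = 0 := by
  fin_cases k <;> fin_cases x <;> fin_cases y <;> simp_all [pauli]

lemma pauli_apply_self_of_two_le {k : Fin 4} (hk : 2 ≤ (k : ℕ)) (x : Fin 2) :
    pauli k x x = 0 := by
  fin_cases k <;> fin_cases x <;> simp_all [pauli]

-- The coefficient is `½ tr(σ_kᴴ E_{xy})`: the `σ_k` are orthogonal for the trace form.
lemma single_eq_sum_pauli (x y : Fin 2) :
    single x y (1 : ℂ) = ∑ k, (2⁻¹ * pauli k y x) • pauli k := by
  ext x' y'
  fin_cases x <;> fin_cases y <;> fin_cases x' <;> fin_cases y' <;>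
    simp [Fin.sum_univ_four, pauli, mul_assoc] <;> norm_num

lemma pauliWord_conjTranspose {n : ℕ} (j : Fin n → Fin 4) : (pauliWord j)ᴴ = pauliWord j := by
  ext a b
  simp [pauliWord, star_prod, star_pauli_apply]

lemma pauliWord_apply_eq_zero {n : ℕ} {j : Fin n → Fin 4} {a b : Fin n → Fin 2} (r : Fin n)
    (h : pauli (j r) (a r) (b r) = 0) : pauliWord j a b = 0 :=
  Finset.prod_eq_zero (Finset.mem_univ r) h

lemma single_apply_eq_prod {n : ℕ} (a b a' b' : Fin n → Fin 2) :
    single a b (1 : ℂ) a' b' = ∏ i, single (a i) (b i) (1 : ℂ) (a' i) (b' i) := by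
  simp only [single_apply, Fintype.prod_boole, funext_iff, forall_and]

lemma single_eq_sum_pauliWord {n : ℕ} (a b : Fin n → Fin 2) :
    single a b (1 : ℂ) = ∑ j, (((2 : ℂ) ^ n)⁻¹ * pauliWord j b a) • pauliWord j := by
  ext a' b'
  rw [single_apply_eq_prod]
  simp only [single_eq_sum_pauli, Matrix.sum_apply, Matrix.smul_apply, smul_eq_mul,
    Finset.prod_univ_sum, Fintype.piFinset_univ, Finset.prod_mul_distrib, pauliWord, of_apply,
    Finset.prod_const, Finset.card_univ, Fintype.card_fin, inv_pow, mul_assoc]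

def nonCommutingPauliWords (n s : ℕ) : Set (Matrix (Fin n → Fin 2) (Fin n → Fin 2) ℂ) :=
  {x | ∃ j : Fin n → Fin 4, (∃ r : Fin n, (r : ℕ) < s ∧ 2 ≤ (j r : ℕ)) ∧ x = pauliWord j}

def AgreeBelow {n : ℕ} (s : ℕ) (a b : Fin n → Fin 2) : Prop :=
  ∀ r : Fin n, (r : ℕ) < s → a r = b r

def offDiagBlocks (n s : ℕ) : Submodule ℂ (Matrix (Fin n → Fin 2) (Fin n → Fin 2) ℂ) where
  carrier := {M | ∀ a b, AgreeBelow s a b → M a b = 0}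
  add_mem' hM hN a b hab := by simp [hM a b hab, hN a b hab]
  zero_mem' _ _ _ := rfl
  smul_mem' c M hM a b hab := by simp [hM a b hab]

lemma one_notMem_offDiagBlocks (n s : ℕ) :
    (1 : Matrix (Fin n → Fin 2) (Fin n → Fin 2) ℂ) ∉ offDiagBlocks n s :=
  fun h => one_ne_zero ((one_apply_eq 0).symm.trans (h 0 0 fun _ _ => rfl))

lemma single_mem_span_nonCommutingPauliWords {n s : ℕ} {a b : Fin n → Fin 2} {r : Fin n}
    (hr : (r : ℕ) < s) (hab : a r ≠ b r) :
    single a b (1 : ℂ) ∈ Submodule.span ℂ (nonCommutingPauliWords n s) := by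
  rw [single_eq_sum_pauliWord]
  refine Submodule.sum_mem _ fun j _ => ?_
  by_cases hj : 2 ≤ (j r : ℕ)
  · exact Submodule.smul_mem _ _ (Submodule.subset_span ⟨j, ⟨r, hr, hj⟩, rfl⟩)
  · rw [pauliWord_apply_eq_zero r (pauli_apply_of_lt_two (not_le.mp hj) (Ne.symm hab)),
      mul_zero, zero_smul]
    exact Submodule.zero_mem _

lemma offDiagBlocks_le_span (n s : ℕ) :
    offDiagBlocks n s ≤ Submodule.span ℂ (nonCommutingPauliWords n s) := by
  intro M hM
  rw [matrix_eq_sum_single M]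
  refine Submodule.sum_mem _ fun a _ => Submodule.sum_mem _ fun b _ => ?_
  by_cases hab : AgreeBelow s a b
  · rw [hM a b hab, single_zero]
    exact Submodule.zero_mem _
  · obtain ⟨r, hr, hne⟩ : ∃ r : Fin n, (r : ℕ) < s ∧ a r ≠ b r := by
      simpa [AgreeBelow] using hab
    rw [← mul_one (M a b), ← smul_eq_mul, ← smul_single]
    exact Submodule.smul_mem _ _ (single_mem_span_nonCommutingPauliWords hr hne)

def zSign (x : Fin 2) : ℤˣ := (-1) ^ (x : ℕ)

lemma pauli_one_apply_self (x : Fin 2) : pauli 1 x x = ((zSign x : ℤ) : ℂ) := by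
  fin_cases x <;> simp [pauli, zSign]

lemma Zword_eq_diagonal {n : ℕ} (r : Fin n) :
    Zword r = diagonal fun a => ((zSign (a r) : ℤ) : ℂ) := by
  ext a b
  by_cases hab : a = b
  · subst hab
    rw [diagonal_apply_eq, Zword, pauliWord, of_apply,
      Finset.prod_eq_single r (fun i _ hi => by simp [hi, pauli]) (by simp)]
    rw [if_pos rfl, pauli_one_apply_self]
  · obtain ⟨i, hi⟩ := Function.ne_iff.mp hab
    rw [diagonal_apply_ne _ hab, Zword,
      pauliWord_apply_eq_zero i (pauli_apply_of_lt_two (by split <;> decide) hi)]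

def signDiagonals (n s : ℕ) : Submonoid (Matrix (Fin n → Fin 2) (Fin n → Fin 2) ℂ) where
  carrier := {g | ∃ ε : (Fin n → Fin 2) → ℤˣ, g = diagonal (fun a => ((ε a : ℤ) : ℂ)) ∧
    ∀ a b, AgreeBelow s a b → ε a = ε b}
  one_mem' := ⟨1, by simp, fun _ _ _ => rfl⟩
  mul_mem' := by
    rintro _ _ ⟨ε, rfl, hε⟩ ⟨δ, rfl, hδ⟩
    exact ⟨ε * δ, by simp [diagonal_mul_diagonal], fun a b hab => by simp [hε a b hab, hδ a b hab]⟩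

lemma ZSubgroup_le_signDiagonals (n s : ℕ) : ZSubgroup n s ≤ signDiagonals n s := by
  refine Submonoid.closure_le.mpr ?_
  rintro _ ⟨r, hr, rfl⟩
  exact ⟨fun a => zSign (a r), Zword_eq_diagonal r, fun a b hab => congrArg zSign (hab r hr)⟩

lemma conjTranspose_eq_self_of_mem_signDiagonals {n s : ℕ} {g : Matrix (Fin n → Fin 2) (Fin n → Fin 2) ℂ}
    (hg : g ∈ signDiagonals n s) : gᴴ = g := by
  obtain ⟨ε, rfl, -⟩ := hg
  rw [diagonal_conjTranspose]
  congr 1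
  ext a
  simp

lemma conj_sub_mem_offDiagBlocks {n s : ℕ} {g : Matrix (Fin n → Fin 2) (Fin n → Fin 2) ℂ}
    (hg : g ∈ signDiagonals n s) (M : Matrix (Fin n → Fin 2) (Fin n → Fin 2) ℂ) :
    g * M * g - M ∈ offDiagBlocks n s := by
  obtain ⟨ε, rfl, hε⟩ := hg
  intro a b hab
  have hsq : ((ε a : ℤ) : ℂ) * ((ε a : ℤ) : ℂ) = 1 := by
    rw [← Int.cast_mul, ← Units.val_mul, Int.units_mul_self, Units.val_one, Int.cast_one]
  rw [Matrix.sub_apply, mul_diagonal, diagonal_mul, ← hε a b hab]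
  linear_combination M a b * hsq

def IsOperatorSystem {ι : Type*} [Fintype ι] [DecidableEq ι] (S : Submodule ℂ (Matrix ι ι ℂ)) :
    Prop :=
  1 ∈ S ∧ ∀ A ∈ S, Aᴴ ∈ S

def conjSpan (n s : ℕ) (M : Matrix (Fin n → Fin 2) (Fin n → Fin 2) ℂ) :
    Submodule ℂ (Matrix (Fin n → Fin 2) (Fin n → Fin 2) ℂ) :=
  Submodule.span ℂ {x | ∃ g ∈ ZSubgroup n s, x = g * M * g}

lemma conjSpan_le_sup (n s : ℕ) (M : Matrix (Fin n → Fin 2) (Fin n → Fin 2) ℂ) :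
    conjSpan n s M ≤ ℂ ∙ M ⊔ offDiagBlocks n s := by
  rw [conjSpan, Submodule.span_le]
  rintro _ ⟨g, hg, rfl⟩
  rw [← add_sub_cancel M (g * M * g)]
  exact Submodule.add_mem_sup (Submodule.mem_span_singleton_self M)
    (conj_sub_mem_offDiagBlocks (ZSubgroup_le_signDiagonals n s hg) M)

lemma conjSpan_le_of_one_mem {n s : ℕ} {M : Matrix (Fin n → Fin 2) (Fin n → Fin 2) ℂ}
    (h1 : 1 ∈ conjSpan n s M) :
    conjSpan n s M ≤ Submodule.span ℂ ({1} ∪ nonCommutingPauliWords n s) := by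
  set W := Submodule.span ℂ ({1} ∪ nonCommutingPauliWords n s)
  have hK : offDiagBlocks n s ≤ W :=
    (offDiagBlocks_le_span n s).trans (Submodule.span_mono Set.subset_union_right)
  have hM : M ∈ W := by
    obtain ⟨y, hy, k, hk, hyk⟩ := Submodule.mem_sup.mp (conjSpan_le_sup n s M h1)
    obtain ⟨c, rfl⟩ := Submodule.mem_span_singleton.mp hy
    have hc : c ≠ 0 := by
      rintro rfl
      rw [zero_smul, zero_add] at hyk
      exact one_notMem_offDiagBlocks n s (hyk ▸ hk)
    have hMk : M = c⁻¹ • (1 - k) := by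
      rw [← hyk, add_sub_cancel_right, smul_smul, inv_mul_cancel₀ hc, one_smul]
    rw [hMk]
    exact W.smul_mem _ (W.sub_mem (Submodule.subset_span (Or.inl rfl)) (hK hk))
  exact (conjSpan_le_sup n s M).trans (sup_le ((Submodule.span_singleton_le_iff_mem _ _).mpr hM) hK)

lemma star_mem_span_of_forall_star_mem {R M : Type*} [CommSemiring R] [StarRing R]
    [AddCommMonoid M] [StarAddMonoid M] [Module R M] [StarModule R M] {S : Set M}
    (hS : ∀ x ∈ S, star x ∈ S) {x : M} (hx : x ∈ Submodule.span R S) :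
    star x ∈ Submodule.span R S := by
  induction hx using Submodule.span_induction with
  | mem x hx => exact Submodule.subset_span (hS x hx)
  | zero => simp
  | add x y _ _ hx hy => rw [star_add]; exact Submodule.add_mem _ hx hy
  | smul c x _ hx => rw [star_smul]; exact Submodule.smul_mem _ _ hx

lemma isOperatorSystem_conjSpan {n s : ℕ} {M : Matrix (Fin n → Fin 2) (Fin n → Fin 2) ℂ}
    (hM : Mᴴ = M) (h1 : 1 ∈ conjSpan n s M) : IsOperatorSystem (conjSpan n s M) := by
  refine ⟨h1, fun A hA => star_mem_span_of_forall_star_mem ?_ hA⟩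
  rintro _ ⟨g, hg, rfl⟩
  refine ⟨g, hg, ?_⟩
  rw [star_eq_conjTranspose, conjTranspose_mul, conjTranspose_mul, hM,
    conjTranspose_eq_self_of_mem_signDiagonals (ZSubgroup_le_signDiagonals n s hg), mul_assoc]

lemma self_mem_conjSpan (n s : ℕ) (M : Matrix (Fin n → Fin 2) (Fin n → Fin 2) ℂ) :
    M ∈ conjSpan n s M :=
  Submodule.subset_span ⟨1, Submonoid.one_mem _, by simp⟩

lemma Zword_mul_self {n : ℕ} (r : Fin n) : Zword r * Zword r = 1 := by
  rw [Zword_eq_diagonal, diagonal_mul_diagonal, ← diagonal_one]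
  congr 1
  ext a
  rw [← Int.cast_mul, ← Units.val_mul, Int.units_mul_self, Units.val_one, Int.cast_one]

lemma Zword_mul_pauliWord_mul_Zword {n : ℕ} {j : Fin n → Fin 4} {r : Fin n}
    (hj : 2 ≤ (j r : ℕ)) : Zword r * pauliWord j * Zword r = -pauliWord j := by
  ext a b
  rw [Zword_eq_diagonal, mul_diagonal, diagonal_mul, Matrix.neg_apply]
  by_cases hab : a r = b r
  · rw [pauliWord_apply_eq_zero r (hab ▸ pauli_apply_self_of_two_le hj (a r))]
    simp
  · have hsign : ((zSign (a r) : ℤ) : ℂ) * ((zSign (b r) : ℤ) : ℂ) = -1 := by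
      revert hab; generalize a r = x; generalize b r = y
      fin_cases x <;> fin_cases y <;> simp [zSign]
    linear_combination pauliWord j a b * hsign

lemma pauliWord_mem_conjSpan_one_add {n s : ℕ} {j : Fin n → Fin 4} {r : Fin n}
    (hr : (r : ℕ) < s) (hj : 2 ≤ (j r : ℕ)) :
    1 ∈ conjSpan n s (1 + pauliWord j) ∧ pauliWord j ∈ conjSpan n s (1 + pauliWord j) := by
  have hminus : 1 - pauliWord j ∈ conjSpan n s (1 + pauliWord j) := by
    refine Submodule.subset_span ⟨Zword r, Submonoid.subset_closure ⟨r, hr, rfl⟩, ?_⟩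
    rw [mul_add, add_mul, mul_one, Zword_mul_self, Zword_mul_pauliWord_mul_Zword hj,
      sub_eq_add_neg]
  have hplus := self_mem_conjSpan n s (1 + pauliWord j)
  constructor
  · convert (conjSpan n s _).smul_mem (2⁻¹ : ℂ) ((conjSpan n s _).add_mem hplus hminus) using 1
    module
  · convert (conjSpan n s _).smul_mem (2⁻¹ : ℂ) ((conjSpan n s _).sub_mem hplus hminus) using 1
    module

theorem statement7_general (n s : ℕ)
    (V : Matrix (Fin n → Fin 2) (Fin n → Fin 2) ℂ →
      Submodule ℂ (Matrix (Fin n → Fin 2) (Fin n → Fin 2) ℂ))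
    (hV : ∀ M₀, V M₀ = Submodule.span ℂ {x | ∃ g ∈ ZSubgroup n s, x = g * M₀ * g}) :
    (⨆ M₀ ∈ {M : Matrix (Fin n → Fin 2) (Fin n → Fin 2) ℂ |
        (1 : Matrix (Fin n → Fin 2) (Fin n → Fin 2) ℂ) ∈ V M ∧ ∀ A ∈ V M, Aᴴ ∈ V M},
      V M₀) =
    Submodule.span ℂ ({(1 : Matrix (Fin n → Fin 2) (Fin n → Fin 2) ℂ)} ∪
      {x | ∃ j : Fin n → Fin 4, (∃ r : Fin n, (r : ℕ) < s ∧ 2 ≤ (j r : ℕ)) ∧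
        x = pauliWord j}) := by
  obtain rfl : V = conjSpan n s := funext hV
  change ⨆ M ∈ {M | IsOperatorSystem (conjSpan n s M)}, conjSpan n s M =
    Submodule.span ℂ ({1} ∪ nonCommutingPauliWords n s)
  have mem_iSup {M A} (hM : IsOperatorSystem (conjSpan n s M)) (hA : A ∈ conjSpan n s M) :
      A ∈ ⨆ M ∈ {M | IsOperatorSystem (conjSpan n s M)}, conjSpan n s M :=
    le_iSup₂ (f := fun M (_ : M ∈ {M | IsOperatorSystem (conjSpan n s M)}) => conjSpan n s M)
      M hM hA
  refine le_antisymm (iSup₂_le fun M hM => conjSpan_le_of_one_mem hM.1) ?_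
  rw [Submodule.span_le]
  rintro _ (rfl | ⟨j, ⟨r, hr, hj⟩, rfl⟩)
  · have h1 := self_mem_conjSpan n s 1
    exact mem_iSup (isOperatorSystem_conjSpan conjTranspose_one h1) h1
  · obtain ⟨h1, hP⟩ := pauliWord_mem_conjSpan_one_add hr hj
    have hM : (1 + pauliWord j)ᴴ = 1 + pauliWord j := by
      rw [conjTranspose_add, conjTranspose_one, pauliWord_conjTranspose]
    exact mem_iSup (isOperatorSystem_conjSpan hM h1) hP

/-- for `G = ⟨Z₁, …, Z_s⟩`, the linear span (supremum), over all
`M₀ ∈ M_{2^n}(ℂ)` for which `𝒱_{M₀} = span{g M₀ g : g ∈ G}` contains the identity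
and is closed under adjoints, of the subspaces `𝒱_{M₀}`, equals
`span({I₂^{⊗n}} ∪ {σ_{j₁} ⊗ ⋯ ⊗ σ_{jₙ} : ∃ r ≤ s, j_r ∈ {2,3}})`. -/
theorem statement7 (n s : ℕ) (hn : 1 ≤ n) (hs : 1 ≤ s) (hsn : s ≤ n)
    (V : Matrix (Fin n → Fin 2) (Fin n → Fin 2) ℂ →
      Submodule ℂ (Matrix (Fin n → Fin 2) (Fin n → Fin 2) ℂ))
    (hV : ∀ M₀, V M₀ = Submodule.span ℂ {x | ∃ g ∈ ZSubgroup n s, x = g * M₀ * g}) :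
    (⨆ M₀ ∈ {M : Matrix (Fin n → Fin 2) (Fin n → Fin 2) ℂ |
        (1 : Matrix (Fin n → Fin 2) (Fin n → Fin 2) ℂ) ∈ V M ∧ ∀ A ∈ V M, Aᴴ ∈ V M},
      V M₀) =
    Submodule.span ℂ ({(1 : Matrix (Fin n → Fin 2) (Fin n → Fin 2) ℂ)} ∪
      {x | ∃ j : Fin n → Fin 4, (∃ r : Fin n, (r : ℕ) < s ∧ 2 ≤ (j r : ℕ)) ∧
        x = pauliWord j}) :=
  statement7_general n s V hV
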